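/- arXiv:1301.6647 — 2 statements merged into one kernel-verified Lean document; each statement's English description precedes it below -/
import Mathlib

section
/- Two extended Poisson-binomial distributions with parameters (λ, p_1, p_2, ...) and (λ', p'_1, p'_2, ...), where λ, λ' ≥ 0 and (p_k), (p'_k) are nonincreasing sequences in [0,1] with finite sums, are equal if and only if λ = λ' and p_k = p'_k for all k. -/
/-!
The generating function of `S = ∑ₖ Zₖ` is `E[r^S] = e^{-λ(1-r)} ∏ₖ (1 - pₖ(1-r))`. Writing
`r = 1 - s`, the law of `S` therefore determines, for `s ∈ (0,1)`,
`-log E[(1-s)^S] = λ s - ∑ₖ log(1 - pₖ s) = (λ + ∑ₖ pₖ) s + ∑_{m ≥ 2} (∑ₖ pₖ^m) s^m / m`,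
and by uniqueness of power series coefficients the numbers `λ + ∑ₖ pₖ` and all power sums
`∑ₖ pₖ^m`, `m ≥ 2`. For a nonincreasing sequence, `∑ₖ pₖ^m` is of size `p₀^m` as `m → ∞`, so
the power sums determine `p₀`; removing it and repeating recovers the whole sequence, and then
`λ`. Conversely, a law on `ℕ` is determined by its generating function near `0`.
-/

open MeasureTheory ProbabilityTheory Filter Topology
open scoped ENNReal

lemma hasFPowerSeriesAt_tsum_mul_pow {a : ℕ → ℝ} {C : ℝ} (ha : ∀ n, |a n| ≤ C) :
    HasFPowerSeriesAt (fun s => ∑' n, a n * s ^ n)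
      (FormalMultilinearSeries.ofScalars ℝ a) 0 := by
  have hrad : 0 < (FormalMultilinearSeries.ofScalars ℝ a).radius :=
    lt_of_lt_of_le (by simp) <| FormalMultilinearSeries.le_radius_of_bound _ C (r := 1)
      fun n => by simpa using ha n
  have := (FormalMultilinearSeries.ofScalars ℝ a).hasFPowerSeriesOnBall hrad
  simpa [← FormalMultilinearSeries.ofScalarsSum.eq_def,
    FormalMultilinearSeries.ofScalarsSum_eq_tsum] using this.hasFPowerSeriesAt

lemma eq_of_eventually_tsum_mul_pow_eq {a b : ℕ → ℝ} {C D : ℝ} (ha : ∀ n, |a n| ≤ C)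
    (hb : ∀ n, |b n| ≤ D)
    (h : ∀ᶠ s in 𝓝[>] 0, ∑' n, a n * s ^ n = ∑' n, b n * s ^ n) : a = b := by
  have hfa := hasFPowerSeriesAt_tsum_mul_pow ha
  have hfb := hasFPowerSeriesAt_tsum_mul_pow hb
  have hfreq : ∃ᶠ s in 𝓝[≠] (0 : ℝ), ∑' n, a n * s ^ n = ∑' n, b n * s ^ n :=
    h.frequently.filter_mono (nhdsGT_le_nhdsNE 0)
  have hev := (hfa.analyticAt.frequently_eq_iff_eventually_eq hfb.analyticAt).mp hfreq
  exact FormalMultilinearSeries.ofScalars_series_injective ℝ ℝ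
    (hfa.eq_formalMultilinearSeries_of_eventually hfb hev)

lemma lintegral_ofReal_pow_eq_ofReal_tsum (ν : Measure ℕ) [IsFiniteMeasure ν] {r : ℝ}
    (hr0 : 0 ≤ r) (hr1 : r < 1) :
    ∫⁻ n, ENNReal.ofReal (r ^ n) ∂ν = ENNReal.ofReal (∑' n, ν.real {n} * r ^ n) := by
  have hsum : Summable fun n => ν.real {n} * r ^ n :=
    ((summable_geometric_of_lt_one hr0 hr1).mul_left (ν.real Set.univ)).of_nonneg_of_le
      (fun n => by positivity) fun n =>
        mul_le_mul_of_nonneg_right (measureReal_mono (Set.subset_univ _)) (pow_nonneg hr0 n)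
  rw [lintegral_countable', ENNReal.ofReal_tsum_of_nonneg (fun n => by positivity) hsum]
  congr 1 with n
  rw [ENNReal.ofReal_mul measureReal_nonneg, ofReal_measureReal, mul_comm]

lemma MeasureTheory.Measure.ext_of_lintegral_ofReal_pow {ν ν' : Measure ℕ}
    [IsFiniteMeasure ν] [IsFiniteMeasure ν']
    (h : ∀ᶠ r in 𝓝[>] 0, ∫⁻ n, ENNReal.ofReal (r ^ n) ∂ν = ∫⁻ n, ENNReal.ofReal (r ^ n) ∂ν') :
    ν = ν' := by
  have hbound (κ : Measure ℕ) [IsFiniteMeasure κ] (n : ℕ) : |κ.real {n}| ≤ κ.real Set.univ := by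
    rw [abs_of_nonneg measureReal_nonneg]
    exact measureReal_mono (Set.subset_univ _)
  have hcoeff : (fun n => ν.real {n}) = fun n => ν'.real {n} := by
    refine eq_of_eventually_tsum_mul_pow_eq (hbound ν) (hbound ν') ?_
    filter_upwards [h, Ioo_mem_nhdsGT one_pos] with r hr hr01
    rwa [lintegral_ofReal_pow_eq_ofReal_tsum ν hr01.1.le hr01.2,
      lintegral_ofReal_pow_eq_ofReal_tsum ν' hr01.1.le hr01.2, ENNReal.ofReal_eq_ofReal_iff
      (tsum_nonneg fun n => mul_nonneg measureReal_nonneg (pow_nonneg hr01.1.le n))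
      (tsum_nonneg fun n => mul_nonneg measureReal_nonneg (pow_nonneg hr01.1.le n))] at hr
  refine Measure.ext_iff_singleton.mpr fun n => ?_
  rw [← ofReal_measureReal, ← ofReal_measureReal, congrFun hcoeff n]

lemma hasSum_tsum_swap_of_nonneg {α β : Type*} {f : α → β → ℝ} (hf : ∀ a b, 0 ≤ f a b)
    {g : α → ℝ} (hrow : ∀ a, HasSum (f a) (g a)) (hg : Summable g) :
    HasSum (fun b => ∑' a, f a b) (∑' a, g a) := by
  have hF : Summable (Function.uncurry f) :=
    (summable_prod_of_nonneg fun q => hf q.1 q.2).2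
      ⟨fun a => (hrow a).summable, hg.congr fun a => (hrow a).tsum_eq.symm⟩
  rw [(hF.hasSum.prod_fiberwise hrow).tsum_eq]
  exact ((Equiv.prodComm β α).hasSum_iff.mpr hF.hasSum).prod_fiberwise
    fun b => (hF.prod_symm.prod_factor b).hasSum

lemma summable_pow_of_mem_Icc {p : ℕ → ℝ} (hp : ∀ k, p k ∈ Set.Icc (0 : ℝ) 1)
    (hps : Summable p) {m : ℕ} (hm : m ≠ 0) : Summable fun k => p k ^ m :=
  hps.of_nonneg_of_le (fun k => pow_nonneg (hp k).1 m)
    fun k => pow_le_of_le_one (hp k).1 (hp k).2 hm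

lemma summable_log_one_sub_mul {p : ℕ → ℝ} (hps : Summable p) (s : ℝ) :
    Summable fun k => Real.log (1 - p k * s) := by
  simpa [sub_eq_add_neg] using Real.summable_log_one_add_of_summable (hps.mul_right s).neg

lemma hasProd_one_sub_mul {p : ℕ → ℝ} (hp : ∀ k, p k ≤ 1) (hps : Summable p) {s : ℝ}
    (hs0 : 0 ≤ s) (hs1 : s < 1) :
    HasProd (fun k => 1 - p k * s) (Real.exp (∑' k, Real.log (1 - p k * s))) :=
  Real.hasProd_of_hasSum_log (fun k => by nlinarith [hp k])
    (summable_log_one_sub_mul hps s).hasSum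

-- `epbExponent lam p s = -log E[(1 - s)^S]` for `S` extended Poisson-binomial with parameters
-- `(lam, p)`, and `epbCoeff lam p` are its Taylor coefficients at `s = 0`.
noncomputable def epbExponent (lam : ℝ) (p : ℕ → ℝ) (s : ℝ) : ℝ :=
  lam * s - ∑' k, Real.log (1 - p k * s)

noncomputable def epbCoeff (lam : ℝ) (p : ℕ → ℝ) : ℕ → ℝ
  | 0 => 0
  | 1 => lam + ∑' k, p k
  | m + 2 => (∑' k, p k ^ (m + 2)) / (m + 2)

lemma abs_epbCoeff_le {lam : ℝ} {p : ℕ → ℝ} (hp : ∀ k, p k ∈ Set.Icc (0 : ℝ) 1)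
    (hps : Summable p) (m : ℕ) : |epbCoeff lam p m| ≤ |lam| + ∑' k, p k := by
  have hsum : 0 ≤ ∑' k, p k := tsum_nonneg fun k => (hp k).1
  match m with
  | 0 => simpa [epbCoeff] using add_nonneg (abs_nonneg lam) hsum
  | 1 => simpa [epbCoeff, abs_of_nonneg hsum] using abs_add_le lam (∑' k, p k)
  | m + 2 =>
    have hmom : 0 ≤ ∑' k, p k ^ (m + 2) := tsum_nonneg fun k => pow_nonneg (hp k).1 _
    have hle : ∑' k, p k ^ (m + 2) ≤ ∑' k, p k :=
      (summable_pow_of_mem_Icc hp hps (by omega)).tsum_le_tsum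
        (fun k => pow_le_of_le_one (hp k).1 (hp k).2 (by omega)) hps
    rw [epbCoeff, abs_of_nonneg (by positivity)]
    calc (∑' k, p k ^ (m + 2)) / (m + 2) ≤ ∑' k, p k ^ (m + 2) :=
          div_le_self hmom (by linarith [(m.cast_nonneg : (0 : ℝ) ≤ m)])
      _ ≤ |lam| + ∑' k, p k := by linarith [abs_nonneg lam]

lemma hasSum_epbCoeff_mul_pow {lam : ℝ} {p : ℕ → ℝ} (hp : ∀ k, p k ∈ Set.Icc (0 : ℝ) 1)
    (hps : Summable p) {s : ℝ} (hs0 : 0 ≤ s) (hs1 : s < 1) :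
    HasSum (fun m => epbCoeff lam p m * s ^ m) (epbExponent lam p s) := by
  have hlog : ∀ k, HasSum (fun m : ℕ => p k ^ (m + 1) * (s ^ (m + 1) / (m + 1)))
      (-Real.log (1 - p k * s)) := fun k => by
    have hx : |p k * s| < 1 := by
      rw [abs_of_nonneg (mul_nonneg (hp k).1 hs0)]
      nlinarith [(hp k).1, (hp k).2]
    simpa [mul_pow, mul_div_assoc] using Real.hasSum_pow_div_log_of_abs_lt_one hx
  have hmoments : HasSum (fun m : ℕ => (∑' k, p k ^ (m + 1)) * (s ^ (m + 1) / (m + 1)))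
      (∑' k, -Real.log (1 - p k * s)) := by
    simpa only [tsum_mul_right] using hasSum_tsum_swap_of_nonneg
      (fun k m => mul_nonneg (pow_nonneg (hp k).1 _) (by positivity)) hlog
      (summable_log_one_sub_mul hps s).neg
  have hshift : HasSum (fun m => epbCoeff lam p (m + 1) * s ^ (m + 1)) (epbExponent lam p s) := by
    rw [epbExponent, sub_eq_add_neg, ← tsum_neg]
    convert (hasSum_ite_eq 0 (lam * s)).add hmoments using 1
    funext m
    rcases m with _ | m <;> simp [epbCoeff] <;> ring
  refine (hasSum_nat_add_iff' 1).mp ?_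
  simpa [epbCoeff] using hshift

lemma head_le_of_tsum_pow_eq {a b : ℕ → ℝ} (ha : ∀ k, a k ∈ Set.Icc (0 : ℝ) 1)
    (has : Summable a) (hb : ∀ k, 0 ≤ b k) (hbm : Antitone b) (hbs : Summable b)
    (h : ∀ m, ∑' k, a k ^ (m + 2) = ∑' k, b k ^ (m + 2)) : a 0 ≤ b 0 := by
  by_contra! hlt
  have ha0 : 0 < a 0 := (hb 0).trans_lt hlt
  set T := ∑' k, b k
  set q := b 0 / a 0
  have hpow : ∀ n k, b k ^ (n + 2) ≤ b 0 ^ (n + 1) * b k := fun n k => by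
    rw [pow_succ]
    gcongr
    exacts [hb k, hb k, hbm (Nat.zero_le k)]
  have hmoment : ∀ n, a 0 ^ (n + 2) ≤ b 0 ^ (n + 1) * T := fun n =>
    calc a 0 ^ (n + 2) ≤ ∑' k, a k ^ (n + 2) :=
          (summable_pow_of_mem_Icc ha has (by omega)).le_tsum 0
            fun k _ => pow_nonneg (ha k).1 _
      _ = ∑' k, b k ^ (n + 2) := h n
      _ ≤ ∑' k, b 0 ^ (n + 1) * b k :=
          ((hbs.mul_left _).of_nonneg_of_le (fun k => pow_nonneg (hb k) _) (hpow n)).tsum_le_tsum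
            (hpow n) (hbs.mul_left _)
      _ = b 0 ^ (n + 1) * T := tsum_mul_left
  have hq : Tendsto (fun n => b 0 * T * q ^ n) atTop (𝓝 0) := by
    simpa using (tendsto_pow_atTop_nhds_zero_of_lt_one (div_nonneg (hb 0) ha0.le)
      ((div_lt_one ha0).mpr hlt)).const_mul (b 0 * T)
  have : a 0 ^ 2 ≤ 0 := ge_of_tendsto' hq fun n => by
    refine le_of_mul_le_mul_right ?_ (pow_pos ha0 n)
    calc a 0 ^ 2 * a 0 ^ n = a 0 ^ (n + 2) := by ring
      _ ≤ b 0 ^ (n + 1) * T := hmoment n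
      _ = b 0 * T * q ^ n * a 0 ^ n := by simp only [q, div_pow]; field_simp; ring
  nlinarith

lemma head_eq_of_tsum_pow_eq {a b : ℕ → ℝ}
    (ha : ∀ k, a k ∈ Set.Icc (0 : ℝ) 1) (hb : ∀ k, b k ∈ Set.Icc (0 : ℝ) 1)
    (ham : Antitone a) (hbm : Antitone b) (has : Summable a) (hbs : Summable b)
    (h : ∀ m, ∑' k, a k ^ (m + 2) = ∑' k, b k ^ (m + 2)) : a 0 = b 0 :=
  le_antisymm (head_le_of_tsum_pow_eq ha has (fun k => (hb k).1) hbm hbs h)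
    (head_le_of_tsum_pow_eq hb hbs (fun k => (ha k).1) ham has fun m => (h m).symm)

lemma eq_of_tsum_pow_eq {a b : ℕ → ℝ}
    (ha : ∀ k, a k ∈ Set.Icc (0 : ℝ) 1) (hb : ∀ k, b k ∈ Set.Icc (0 : ℝ) 1)
    (ham : Antitone a) (hbm : Antitone b) (has : Summable a) (hbs : Summable b)
    (h : ∀ m, ∑' k, a k ^ (m + 2) = ∑' k, b k ^ (m + 2)) : a = b := by
  have hhead : ∀ j, (∀ m, ∑' k, a (k + j) ^ (m + 2) = ∑' k, b (k + j) ^ (m + 2)) →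
      a j = b j := fun j hj => by
    simpa using head_eq_of_tsum_pow_eq (fun k => ha (k + j)) (fun k => hb (k + j))
      (fun k l hkl => ham (by omega)) (fun k l hkl => hbm (by omega))
      ((summable_nat_add_iff j).mpr has) ((summable_nat_add_iff j).mpr hbs) hj
  have htail : ∀ j m, ∑' k, a (k + j) ^ (m + 2) = ∑' k, b (k + j) ^ (m + 2) := by
    intro j
    induction j with
    | zero => simpa using h
    | succ j ih =>
      intro m
      have hsplit : ∀ c : ℕ → ℝ, (∀ k, c k ∈ Set.Icc (0 : ℝ) 1) → Summable c →
          ∑' k, c (k + j) ^ (m + 2) = c j ^ (m + 2) + ∑' k, c (k + (j + 1)) ^ (m + 2) :=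
        fun c hc hcs => by
          rw [(summable_pow_of_mem_Icc (fun k => hc (k + j))
            ((summable_nat_add_iff j).mpr hcs) (by omega)).tsum_eq_zero_add]
          simp only [zero_add, add_assoc, add_comm 1 j]
      have := ih m
      rw [hsplit a ha has, hsplit b hb hbs, hhead j ih] at this
      exact add_left_cancel this
  exact funext fun j => hhead j (htail j)

lemma eq_of_epbExponent_eq {lam lam' : ℝ} {p p' : ℕ → ℝ}
    (hp : ∀ k, p k ∈ Set.Icc (0 : ℝ) 1) (hp' : ∀ k, p' k ∈ Set.Icc (0 : ℝ) 1)
    (hpm : Antitone p) (hpm' : Antitone p') (hps : Summable p) (hps' : Summable p')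
    (h : ∀ s ∈ Set.Ioo (0 : ℝ) 1, epbExponent lam p s = epbExponent lam' p' s) :
    lam = lam' ∧ p = p' := by
  have hcoeff : epbCoeff lam p = epbCoeff lam' p' := by
    refine eq_of_eventually_tsum_mul_pow_eq (abs_epbCoeff_le hp hps) (abs_epbCoeff_le hp' hps') ?_
    filter_upwards [Ioo_mem_nhdsGT one_pos] with s hs
    rw [(hasSum_epbCoeff_mul_pow hp hps hs.1.le hs.2).tsum_eq,
      (hasSum_epbCoeff_mul_pow hp' hps' hs.1.le hs.2).tsum_eq, h s hs]
  have hpp : p = p' := eq_of_tsum_pow_eq hp hp' hpm hpm' hps hps' fun m => by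
    have := congrFun hcoeff (m + 2)
    rwa [epbCoeff, epbCoeff, div_left_inj' (by positivity)] at this
  have := congrFun hcoeff 1
  rw [epbCoeff, epbCoeff, hpp, add_left_inj] at this
  exact ⟨this, hpp⟩

section GeneratingFunction

variable {Ω : Type*} [MeasurableSpace Ω] {μ : Measure Ω}

lemma lintegral_ofReal_pow_eq_tsum {X : Ω → ℕ} (hX : Measurable X) (r : ℝ) :
    ∫⁻ ω, ENNReal.ofReal (r ^ X ω) ∂μ = ∑' n : ℕ, ENNReal.ofReal (r ^ n) * μ {ω | X ω = n} := by
  rw [← lintegral_map (f := fun n : ℕ => ENNReal.ofReal (r ^ n)) measurable_from_top hX,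
    lintegral_countable']
  simp_rw [Measure.map_apply hX (measurableSet_singleton _)]
  rfl

lemma lintegral_ofReal_pow_of_poisson {X : Ω → ℕ} (hX : Measurable X) {lam : ℝ} (hlam : 0 ≤ lam)
    (hX_law : ∀ n : ℕ, μ {ω | X ω = n}
      = ENNReal.ofReal (Real.exp (-lam) * lam ^ n / n.factorial)) {r : ℝ} (hr : 0 ≤ r) :
    ∫⁻ ω, ENNReal.ofReal (r ^ X ω) ∂μ = ENNReal.ofReal (Real.exp (lam * (r - 1))) := by
  have hexp : HasSum (fun n : ℕ => Real.exp (-lam) * ((lam * r) ^ n / n.factorial))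
      (Real.exp (lam * (r - 1))) := by
    rw [show lam * (r - 1) = -lam + lam * r by ring, Real.exp_add, Real.exp_eq_exp_ℝ]
    exact (NormedSpace.expSeries_div_hasSum_exp (lam * r)).mul_left _
  rw [lintegral_ofReal_pow_eq_tsum hX, hexp.tsum_eq.symm,
    ENNReal.ofReal_tsum_of_nonneg (fun n => by positivity) hexp.summable]
  congr 1 with n
  rw [hX_law, ← ENNReal.ofReal_mul (by positivity)]
  congr 1
  ring

lemma lintegral_ofReal_pow_of_bernoulli [IsProbabilityMeasure μ] {X : Ω → ℕ} (hX : Measurable X)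
    (hX_le : ∀ ω, X ω ≤ 1) {q : ℝ} (hq : q ∈ Set.Icc (0 : ℝ) 1)
    (hX_law : μ {ω | X ω = 1} = ENNReal.ofReal q) {r : ℝ} (hr : 0 ≤ r) :
    ∫⁻ ω, ENNReal.ofReal (r ^ X ω) ∂μ = ENNReal.ofReal (1 - q * (1 - r)) := by
  have h0 : μ {ω | X ω = 0} = ENNReal.ofReal (1 - q) := by
    have hcompl : {ω | X ω = 0} = {ω | X ω = 1}ᶜ := by
      ext ω
      have := hX_le ω
      simp only [Set.mem_ofPred_eq, Set.mem_compl_iff]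
      omega
    rw [hcompl, prob_compl_eq_one_sub (s := {ω | X ω = 1}) (hX (measurableSet_singleton 1)), hX_law,
      ENNReal.ofReal_sub _ hq.1, ENNReal.ofReal_one]
  have hvanish : ∀ n ∉ ({0, 1} : Finset ℕ), ENNReal.ofReal (r ^ n) * μ {ω | X ω = n} = 0 := by
    intro n hn
    have : {ω | X ω = n} = ∅ := by
      ext ω
      have := hX_le ω
      simp only [Finset.mem_insert, Finset.mem_singleton] at hn
      simp only [Set.mem_ofPred_eq, Set.mem_empty_iff_false, iff_false]
      omega
    rw [this, measure_empty, mul_zero]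
  rw [lintegral_ofReal_pow_eq_tsum hX, tsum_eq_sum hvanish, Finset.sum_pair zero_ne_one, h0,
    hX_law, pow_zero, pow_one, ENNReal.ofReal_one, one_mul, ← ENNReal.ofReal_mul hr,
    ← ENNReal.ofReal_add (by linarith [hq.2]) (mul_nonneg hr hq.1)]
  congr 1
  ring

lemma lintegral_ofReal_pow_sum_of_iIndepFun {ι : Type*} {X : ι → Ω → ℕ}
    (hX : ∀ i, Measurable (X i)) (hindep : iIndepFun X μ) (s : Finset ι) {r : ℝ} (hr : 0 ≤ r) :
    ∫⁻ ω, ENNReal.ofReal (r ^ ∑ i ∈ s, X i ω) ∂μ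
      = ∏ i ∈ s, ∫⁻ ω, ENNReal.ofReal (r ^ X i ω) ∂μ := by
  simp_rw [← Finset.prod_pow_eq_pow_sum, ENNReal.ofReal_prod_of_nonneg fun _ _ => pow_nonneg hr _]
  have hφ : Measurable fun n : ℕ => ENNReal.ofReal (r ^ n) := measurable_from_top
  exact lintegral_prod_eq_prod_lintegral_of_indepFun s _ (hindep.comp (fun _ => _) fun _ => hφ)
    fun i => hφ.comp (hX i)

end GeneratingFunction

structure IsExtPoissonBinomial {Ω : Type*} [MeasurableSpace Ω] (μ : Measure Ω) (lam : ℝ)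
    (p : ℕ → ℝ) (Z : ℕ → Ω → ℕ) : Prop where
  measurable : ∀ k, Measurable (Z k)
  poisson : ∀ n : ℕ, μ {ω | Z 0 ω = n}
    = ENNReal.ofReal (Real.exp (-lam) * lam ^ n / n.factorial)
  le_one : ∀ k ω, Z (k + 1) ω ≤ 1
  bernoulli : ∀ k, μ {ω | Z (k + 1) ω = 1} = ENNReal.ofReal (p k)
  indep : iIndepFun Z μ

namespace IsExtPoissonBinomial

variable {Ω : Type*} [MeasurableSpace Ω] {μ : Measure Ω} {lam : ℝ}
  {p : ℕ → ℝ} {Z : ℕ → Ω → ℕ}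

lemma ae_summable (hZ : IsExtPoissonBinomial μ lam p Z) (hp : ∀ k, 0 ≤ p k)
    (hps : Summable p) : ∀ᵐ ω ∂μ, Summable fun k => Z k ω := by
  have hfin : ∑' k, μ {ω | Z (k + 1) ω = 1} ≠ ∞ := by
    simp_rw [hZ.bernoulli, ← ENNReal.ofReal_tsum_of_nonneg hp hps]
    exact ENNReal.ofReal_ne_top
  filter_upwards [ae_eventually_notMem hfin] with ω hω
  obtain ⟨N, hN⟩ := eventually_atTop.mp hω
  refine summable_of_ne_finset_zero (s := Finset.range (N + 1)) fun k hk => ?_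
  rw [Finset.mem_range, not_lt] at hk
  obtain ⟨j, rfl⟩ : ∃ j, k = j + 1 := ⟨k - 1, by omega⟩
  have hne : Z (j + 1) ω ≠ 1 := hN j (by omega)
  have := hZ.le_one j ω
  omega

lemma lintegral_ofReal_pow_tsum [IsProbabilityMeasure μ] (hZ : IsExtPoissonBinomial μ lam p Z)
    (hlam : 0 ≤ lam) (hp : ∀ k, p k ∈ Set.Icc (0 : ℝ) 1) (hps : Summable p) {r : ℝ} (hr0 : 0 < r)
    (hr1 : r ≤ 1) :
    ∫⁻ ω, ENNReal.ofReal (r ^ ∑' k, Z k ω) ∂μ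
      = ENNReal.ofReal (Real.exp (-epbExponent lam p (1 - r))) := by
  have hφ : Continuous fun n : ℕ => ENNReal.ofReal (r ^ n) := continuous_of_discreteTopology
  have hpartial : Tendsto (fun N => ∫⁻ ω, ENNReal.ofReal (r ^ ∑ k ∈ Finset.range N, Z k ω) ∂μ)
      atTop (𝓝 (∫⁻ ω, ENNReal.ofReal (r ^ ∑' k, Z k ω) ∂μ)) := by
    refine tendsto_lintegral_of_dominated_convergence 1
      (fun N => hφ.measurable.comp (Finset.measurable_sum _ fun k _ => hZ.measurable k))
      (fun N => ae_of_all _ fun ω => ENNReal.ofReal_le_one.mpr (pow_le_one₀ hr0.le hr1))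
      (by simp) ?_
    filter_upwards [hZ.ae_summable (fun k => (hp k).1) hps] with ω hω
    exact (hφ.tendsto _).comp hω.hasSum.tendsto_sum_nat
  have hfactor : ∀ N, ∫⁻ ω, ENNReal.ofReal (r ^ ∑ k ∈ Finset.range (N + 1), Z k ω) ∂μ
      = ENNReal.ofReal (∏ k ∈ Finset.range N, (1 - p k * (1 - r)))
        * ENNReal.ofReal (Real.exp (lam * (r - 1))) := fun N => by
    rw [lintegral_ofReal_pow_sum_of_iIndepFun hZ.measurable hZ.indep _ hr0.le,
      Finset.prod_range_succ', lintegral_ofReal_pow_of_poisson (hZ.measurable 0) hlam hZ.poisson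
      hr0.le, ENNReal.ofReal_prod_of_nonneg fun k _ => by nlinarith [(hp k).1, (hp k).2]]
    exact congrArg (· * _) <| Finset.prod_congr rfl fun k _ => lintegral_ofReal_pow_of_bernoulli
      (hZ.measurable _) (hZ.le_one k) (hp k) (hZ.bernoulli k) hr0.le
  have hprod : Tendsto (fun N => ENNReal.ofReal (∏ k ∈ Finset.range N, (1 - p k * (1 - r)))
      * ENNReal.ofReal (Real.exp (lam * (r - 1)))) atTop
      (𝓝 (ENNReal.ofReal (Real.exp (∑' k, Real.log (1 - p k * (1 - r))))
        * ENNReal.ofReal (Real.exp (lam * (r - 1))))) :=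
    ENNReal.Tendsto.mul_const (ENNReal.tendsto_ofReal (hasProd_one_sub_mul (fun k => (hp k).2)
      hps (sub_nonneg.mpr hr1) (sub_lt_self 1 hr0)).tendsto_prod_nat) (Or.inr ENNReal.ofReal_ne_top)
  rw [tendsto_nhds_unique ((hpartial.comp (tendsto_add_atTop_nat 1)).congr hfactor) hprod,
    ← ENNReal.ofReal_mul (Real.exp_pos _).le, ← Real.exp_add, epbExponent]
  congr 2
  ring

lemma lintegral_map_tsum [IsProbabilityMeasure μ] (hZ : IsExtPoissonBinomial μ lam p Z)
    (hlam : 0 ≤ lam) (hp : ∀ k, p k ∈ Set.Icc (0 : ℝ) 1) (hps : Summable p) {r : ℝ} (hr0 : 0 < r)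
    (hr1 : r ≤ 1) :
    ∫⁻ n, ENNReal.ofReal (r ^ n) ∂(μ.map fun ω => ∑' k, Z k ω)
      = ENNReal.ofReal (Real.exp (-epbExponent lam p (1 - r))) := by
  have hS : AEMeasurable (fun ω => ∑' k, Z k ω) μ := by
    refine aemeasurable_of_tendsto_metrizable_ae' (fun N => (Finset.measurable_sum
      (Finset.range N) fun k _ => hZ.measurable k).aemeasurable) ?_
    filter_upwards [hZ.ae_summable (fun k => (hp k).1) hps] with ω hω
    exact hω.hasSum.tendsto_sum_nat
  rw [lintegral_map' measurable_from_top.aemeasurable hS]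
  exact hZ.lintegral_ofReal_pow_tsum hlam hp hps hr0 hr1

end IsExtPoissonBinomial

/-- Lemma C.1(2): two extended Poisson-binomial distributions, with parameters
`(λ, p₁, p₂, …)` and `(λ', p'₁, p'₂, …)` where the `p`s are nonincreasing `[0,1]`-sequences
with finite sum, coincide if and only if the parameters coincide. The distributions are
realized as laws of `∑ₖ Z k` with `Z 0 ~ Poisson(λ)` and `Z (k+1) ~ Bernoulli(p k)`
independent. -/
theorem stmt5 {Ω Ω' : Type*} [MeasurableSpace Ω] [MeasurableSpace Ω']
    (μ : Measure Ω) [IsProbabilityMeasure μ] (μ' : Measure Ω') [IsProbabilityMeasure μ']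
    (lam lam' : ℝ) (hlam : 0 ≤ lam) (hlam' : 0 ≤ lam')
    (p p' : ℕ → ℝ)
    (hp : ∀ k, p k ∈ Set.Icc (0 : ℝ) 1) (hp' : ∀ k, p' k ∈ Set.Icc (0 : ℝ) 1)
    (hpmono : Antitone p) (hpmono' : Antitone p')
    (hpsum : Summable p) (hpsum' : Summable p')
    (Z : ℕ → Ω → ℕ) (Z' : ℕ → Ω' → ℕ)
    (hZmeas : ∀ k, Measurable (Z k)) (hZmeas' : ∀ k, Measurable (Z' k))
    (hpois : ∀ n : ℕ, μ {ω | Z 0 ω = n}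
      = ENNReal.ofReal (Real.exp (-lam) * lam ^ n / n.factorial))
    (hpois' : ∀ n : ℕ, μ' {ω | Z' 0 ω = n}
      = ENNReal.ofReal (Real.exp (-lam') * lam' ^ n / n.factorial))
    (hbern01 : ∀ k ω, Z (k + 1) ω ≤ 1) (hbern01' : ∀ k ω, Z' (k + 1) ω ≤ 1)
    (hbern : ∀ k, μ {ω | Z (k + 1) ω = 1} = ENNReal.ofReal (p k))
    (hbern' : ∀ k, μ' {ω | Z' (k + 1) ω = 1} = ENNReal.ofReal (p' k))
    (hindep : iIndepFun Z μ)
    (hindep' : iIndepFun Z' μ') :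
    Measure.map (fun ω => ∑' k, Z k ω) μ = Measure.map (fun ω' => ∑' k, Z' k ω') μ'
      ↔ (lam = lam' ∧ p = p') := by
  have hpgf {r : ℝ} (hr0 : 0 < r) (hr1 : r ≤ 1) :=
    IsExtPoissonBinomial.lintegral_map_tsum ⟨hZmeas, hpois, hbern01, hbern, hindep⟩ hlam hp
      hpsum hr0 hr1
  have hpgf' {r : ℝ} (hr0 : 0 < r) (hr1 : r ≤ 1) :=
    IsExtPoissonBinomial.lintegral_map_tsum ⟨hZmeas', hpois', hbern01', hbern', hindep'⟩ hlam'
      hp' hpsum' hr0 hr1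
  constructor
  · intro hlaw
    refine eq_of_epbExponent_eq hp hp' hpmono hpmono' hpsum hpsum' fun s hs => ?_
    have h := hpgf (sub_pos.mpr hs.2) (sub_le_self 1 hs.1.le)
    rwa [hlaw, hpgf' (sub_pos.mpr hs.2) (sub_le_self 1 hs.1.le), ENNReal.ofReal_eq_ofReal_iff
      (Real.exp_pos _).le (Real.exp_pos _).le, Real.exp_eq_exp, neg_inj, sub_sub_cancel,
      eq_comm] at h
  · rintro ⟨rfl, rfl⟩
    refine Measure.ext_of_lintegral_ofReal_pow ?_
    filter_upwards [Ioo_mem_nhdsGT one_pos] with r hr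
    rw [hpgf hr.1 hr.2.le, hpgf' hr.1 hr.2.le]
end

section
/- Let (X_n)_{n≥1} be nonnegative-integer-valued random variables converging in distribution to a finite-valued random variable X, where each X_n is Poisson-binomial with nonincreasing parameter vector (p_{n,1}, ..., p_{n,K_n}). Then for each fixed k, the sequence (p_{n,k})_n converges as n → ∞. -/
/-!
Write `#ₙ` for the Poisson-binomial sum with parameters `pₙ₁ ≥ pₙ₂ ≥ ⋯`, and
`xₙₖ := pₙₖ / (2 - pₙₖ)`. The law of `#ₙ` is the coefficient sequence of
`∏ₖ ((1 - pₙₖ) + pₙₖ X)`. Thinning each Bernoulli variable by an independent fair coin substitutes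
`(1 + X) / 2` for `X`; the thinned coefficients are dominated by `(i choose j) 2⁻ⁱ`, so they
converge, and the limit of the constant coefficient is positive. The thinned polynomial is
`∏ₖ (1 - pₙₖ/2) · ∏ₖ (1 + xₙₖ X)`, so its coefficients divided by the constant one are the
elementary symmetric functions of `(xₙₖ)ₖ`, which therefore converge.
By Newton's identities so do all power sums `∑ₖ xₙₖ^m`, `m ≥ 1`. For sorted nonnegative vectors
this forces coordinatewise convergence: by induction on `k` the tails `Tₘ(n) = ∑_{i ≥ k} xₙᵢ^m`
converge to some `Λₘ`, and `xₙₖ^(m+1) ≤ Tₘ₊₁(n) ≤ xₙₖ^m T₁(n)` shows that any two cluster points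
`u, v` of `(xₙₖ)ₙ` satisfy `u^(m+1) ≤ v^m Λ₁` for all `m`, whence `u ≤ v`.
-/

open MeasureTheory ProbabilityTheory Filter Topology Polynomial Finset

section PoissonBinomial

variable {Ω : Type*} [MeasurableSpace Ω] {μ : Measure Ω}

theorem ProbabilityTheory.IndepFun.measureReal_inter_eq_mul {S Y : Ω → ℕ} (hind : IndepFun S Y μ)
    (a b : ℕ) :
    μ.real ({ω | S ω = a} ∩ {ω | Y ω = b}) = μ.real {ω | S ω = a} * μ.real {ω | Y ω = b} := by
  rw [measureReal_def, measureReal_def, measureReal_def, ← ENNReal.toReal_mul]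
  exact congrArg ENNReal.toReal (hind.measure_inter_preimage_eq_mul {a} {b}
    (measurableSet_singleton a) (measurableSet_singleton b))

theorem ProbabilityTheory.IndepFun.measureReal_add_eq_zero {S Y : Ω → ℕ} (hind : IndepFun S Y μ) :
    μ.real {ω | S ω + Y ω = 0} = μ.real {ω | S ω = 0} * μ.real {ω | Y ω = 0} := by
  rw [← hind.measureReal_inter_eq_mul]
  simp only [Nat.add_eq_zero_iff, Set.ofPred_and]

theorem ProbabilityTheory.IndepFun.measureReal_add_eq_succ [IsFiniteMeasure μ] {S Y : Ω → ℕ}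
    (hind : IndepFun S Y μ) (hS : Measurable S) (hY : Measurable Y) (hY01 : ∀ ω, Y ω ≤ 1)
    (j : ℕ) :
    μ.real {ω | S ω + Y ω = j + 1} =
      μ.real {ω | S ω = j + 1} * μ.real {ω | Y ω = 0} +
        μ.real {ω | S ω = j} * μ.real {ω | Y ω = 1} := by
  have hsplit : {ω | S ω + Y ω = j + 1} =
      ({ω | S ω = j + 1} ∩ {ω | Y ω = 0}) ∪ ({ω | S ω = j} ∩ {ω | Y ω = 1}) := by
    ext ω
    rcases Nat.le_one_iff_eq_zero_or_eq_one.1 (hY01 ω) with h | h <;> simp [h]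
  have hdisj : Disjoint ({ω | S ω = j + 1} ∩ {ω | Y ω = 0}) ({ω | S ω = j} ∩ {ω | Y ω = 1}) :=
    Set.disjoint_left.2 fun ω h₁ h₂ => by simp_all
  rw [hsplit, measureReal_union hdisj ((hS (measurableSet_singleton j)).inter
    (hY (measurableSet_singleton 1))), hind.measureReal_inter_eq_mul,
    hind.measureReal_inter_eq_mul]

theorem measureReal_sum_eq_coeff_prod [IsProbabilityMeasure μ] {Y : ℕ → Ω → ℕ}
    (hY : ∀ k, Measurable (Y k)) (hY01 : ∀ k ω, Y k ω ≤ 1) (hind : iIndepFun Y μ) (K j : ℕ) :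
    μ.real {ω | ∑ k ∈ range K, Y k ω = j} =
      (∏ k ∈ range K,
        (C (1 - μ.real {ω | Y k ω = 1}) + C (μ.real {ω | Y k ω = 1}) * X)).coeff j := by
  have hY0 (k : ℕ) : μ.real {ω | Y k ω = 0} = 1 - μ.real {ω | Y k ω = 1} := by
    have hcompl : {ω | Y k ω = 0} = {ω | Y k ω = 1}ᶜ := by
      ext ω
      rcases Nat.le_one_iff_eq_zero_or_eq_one.1 (hY01 k ω) with h | h <;> simp [h]
    exact hcompl ▸ probReal_compl_eq_one_sub (hY k (measurableSet_singleton 1))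
  induction K generalizing j with
  | zero => rcases j with _ | j <;> simp [coeff_one]
  | succ K ih =>
    have hind' : IndepFun (fun ω => ∑ k ∈ range K, Y k ω) (Y K) μ := by
      convert hind.indepFun_finsetSum_of_notMem hY (notMem_range_self (n := K)) using 1
      ext ω
      simp
    have hS : Measurable fun ω => ∑ k ∈ range K, Y k ω := by fun_prop
    simp only [prod_range_succ, sum_range_succ]
    rcases j with _ | j
    · rw [hind'.measureReal_add_eq_zero, ih, hY0, mul_coeff_zero]
      simp
    · rw [hind'.measureReal_add_eq_succ hS (hY K) (hY01 K), ih, ih, hY0, mul_add, coeff_add,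
        coeff_mul_C, ← mul_assoc, coeff_mul_X, coeff_mul_C]

end PoissonBinomial

namespace Polynomial

theorem coeff_prod_C_add_C_mul_X {R ι : Type*} [CommSemiring R] [DecidableEq ι] (s : Finset ι)
    (a b : ι → R) (j : ℕ) :
    (∏ k ∈ s, (C (a k) + C (b k) * X)).coeff j =
      ∑ t ∈ s.powersetCard j, (∏ k ∈ t, b k) * ∏ k ∈ s \ t, a k := by
  simp_rw [add_comm (C _), prod_add, finsetSum_coeff, prod_mul_distrib, prod_const, ← map_prod,
    mul_right_comm _ (X ^ _), ← C_mul, coeff_C_mul_X_pow, powersetCard_eq_filter, sum_filter,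
    eq_comm (a := j)]

theorem coeff_prod_C_add_C_mul_X_eq_mul_esymm {K ι : Type*} [Field K] [DecidableEq ι]
    (s : Finset ι) (a b : ι → K) (ha : ∀ k ∈ s, a k ≠ 0) (j : ℕ) :
    (∏ k ∈ s, (C (a k) + C (b k) * X)).coeff j =
      (∏ k ∈ s, a k) * (s.val.map fun k => b k / a k).esymm j := by
  rw [coeff_prod_C_add_C_mul_X, esymm_map_val, mul_sum]
  refine sum_congr rfl fun t ht => ?_
  have hts := (mem_powersetCard.1 ht).1
  have hat : ∏ k ∈ t, a k ≠ 0 := prod_ne_zero_iff.2 fun k hk => ha k (hts hk)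
  rw [← prod_sdiff hts, prod_div_distrib]
  field_simp

theorem coeff_prod_one_sub_add_mem_Icc {ι : Type*} (s : Finset ι) (p : ι → ℝ)
    (hp : ∀ k, p k ∈ Set.Icc 0 1) (j : ℕ) :
    (∏ k ∈ s, (C (1 - p k) + C (p k) * X)).coeff j ∈ Set.Icc 0 1 := by
  classical
  set P := ∏ k ∈ s, (C (1 - p k) + C (p k) * X)
  have hnonneg (i : ℕ) : 0 ≤ P.coeff i := by
    rw [coeff_prod_C_add_C_mul_X]
    exact sum_nonneg fun t _ => mul_nonneg (prod_nonneg fun k _ => (hp k).1)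
      (prod_nonneg fun k _ => sub_nonneg.2 (hp k).2)
  refine ⟨hnonneg j, ?_⟩
  have hsum : ∑ i ∈ range (P.natDegree + 1), P.coeff i = 1 := by
    simpa [P, eval_prod] using (eval_eq_sum_range (p := P) 1).symm
  rcases lt_or_ge P.natDegree j with hj | hj
  · rw [coeff_eq_zero_of_natDegree_lt hj]
    exact zero_le_one
  · exact hsum ▸ single_le_sum (fun i _ => hnonneg i) (mem_range.2 (Nat.lt_succ_of_le hj))

theorem prod_C_add_C_mul_X_comp {R ι : Type*} [CommRing R] (s : Finset ι) (a : ι → R) (r : R) :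
    (∏ k ∈ s, (C (1 - a k) + C (a k) * X)).comp (C (1 - r) + C r * X) =
      ∏ k ∈ s, (C (1 - r * a k) + C (r * a k) * X) := by
  simp only [prod_comp, add_comp, mul_comp, C_comp, X_comp]
  refine prod_congr rfl fun k _ => ?_
  simp only [map_sub, map_one, map_mul]
  ring

theorem coeff_comp_half (Q : ℝ[X]) (j : ℕ) :
    (Q.comp (C 2⁻¹ + C 2⁻¹ * X)).coeff j = ∑' i, Q.coeff i * i.choose j * 2⁻¹ ^ i := by
  have hpow (i : ℕ) : (C (2⁻¹ : ℝ) + C 2⁻¹ * X) ^ i = C (2⁻¹ ^ i) * (1 + X) ^ i := by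
    rw [C_pow, ← mul_pow, mul_add, mul_one]
  rw [comp, eval₂_eq_sum_range, finsetSum_coeff, tsum_eq_sum (s := range (Q.natDegree + 1))]
  · refine sum_congr rfl fun i _ => ?_
    rw [hpow, ← mul_assoc, ← C_mul, coeff_C_mul, coeff_one_add_X_pow]
    ring
  · intro i hi
    rw [coeff_eq_zero_of_natDegree_lt (by simpa using hi), zero_mul, zero_mul]

end Polynomial

theorem summable_choose_mul_inv_two_pow (j : ℕ) :
    Summable fun i : ℕ => (i.choose j : ℝ) * 2⁻¹ ^ i := by
  refine (summable_nat_add_iff j).1 ?_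
  simpa [pow_add, mul_comm, mul_left_comm, mul_assoc] using
    (summable_choose_mul_geometric_of_norm_lt_one j (r := (2⁻¹ : ℝ)) (by norm_num)).mul_left
      ((2 : ℝ)⁻¹ ^ j)

theorem tendsto_coeff_comp_half {Q : ℕ → ℝ[X]} {q : ℕ → ℝ}
    (hQ : ∀ n i, (Q n).coeff i ∈ Set.Icc 0 1)
    (hlim : ∀ i, Tendsto (fun n => (Q n).coeff i) atTop (𝓝 (q i))) (j : ℕ) :
    Tendsto (fun n => ((Q n).comp (C 2⁻¹ + C 2⁻¹ * X)).coeff j) atTop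
      (𝓝 (∑' i, q i * i.choose j * 2⁻¹ ^ i)) := by
  simp_rw [coeff_comp_half]
  refine tendsto_tsum_of_dominated_convergence (summable_choose_mul_inv_two_pow j)
    (fun i => ((hlim i).mul_const _).mul_const _) (.of_forall fun n i => ?_)
  obtain ⟨h0, h1⟩ := hQ n i
  rw [Real.norm_of_nonneg (by positivity), mul_assoc]
  exact mul_le_of_le_one_left (by positivity) h1

theorem exists_tendsto_esymm_of_tendsto_coeff_prod {ι : Type*} {s : ℕ → Finset ι}
    {p : ℕ → ι → ℝ} (hp : ∀ n k, p n k ∈ Set.Icc 0 1) {q : ℕ → ℝ} (hq : ∃ i, q i ≠ 0)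
    (hlim : ∀ i, Tendsto (fun n => (∏ k ∈ s n, (C (1 - p n k) + C (p n k) * X)).coeff i) atTop
      (𝓝 (q i))) (j : ℕ) :
    ∃ e, Tendsto (fun n => ((s n).val.map fun k => p n k / (2 - p n k)).esymm j) atTop (𝓝 e) := by
  classical
  have hQ (n i : ℕ) := coeff_prod_one_sub_add_mem_Icc (s n) (p n) (hp n) i
  have hq01 (i : ℕ) : q i ∈ Set.Icc 0 1 :=
    isClosed_Icc.mem_of_tendsto (hlim i) (.of_forall fun n => hQ n i)
  have hthin := tendsto_coeff_comp_half hQ hlim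
  have hpos : 0 < ∑' i, q i * i.choose 0 * 2⁻¹ ^ i := by
    obtain ⟨i₀, hi₀⟩ := hq
    have hnonneg (i : ℕ) : 0 ≤ q i * i.choose 0 * 2⁻¹ ^ i := by
      have := (hq01 i).1
      positivity
    refine Summable.tsum_pos ((summable_choose_mul_inv_two_pow 0).of_nonneg_of_le hnonneg
      fun i => ?_) hnonneg i₀ ?_
    · rw [mul_assoc]
      exact mul_le_of_le_one_left (by positivity) (hq01 i).2
    · simpa using (hq01 i₀).1.lt_of_ne' hi₀
  have ha (n : ℕ) (k : ι) : 1 - 2⁻¹ * p n k ≠ 0 := by linarith [(hp n k).2]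
  have hcoeff (n j : ℕ) : ((∏ k ∈ s n, (C (1 - p n k) + C (p n k) * X)).comp
      (C 2⁻¹ + C 2⁻¹ * X)).coeff j = (∏ k ∈ s n, (1 - 2⁻¹ * p n k)) *
        ((s n).val.map fun k => p n k / (2 - p n k)).esymm j := by
    rw [show (C 2⁻¹ + C 2⁻¹ * X : ℝ[X]) = C (1 - 2⁻¹) + C 2⁻¹ * X by norm_num,
      prod_C_add_C_mul_X_comp,
      coeff_prod_C_add_C_mul_X_eq_mul_esymm _ _ _ fun k _ => ha n k]
    congr 2
    refine Multiset.map_congr rfl fun k _ => ?_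
    field_simp
  refine ⟨_, ((hthin j).div (hthin 0) hpos.ne').congr fun n => ?_⟩
  have hprod : ∏ k ∈ s n, (1 - 2⁻¹ * p n k) ≠ 0 := prod_ne_zero_iff.2 fun k _ => ha n k
  have hesymm0 : ((s n).val.map fun k => p n k / (2 - p n k)).esymm 0 = 1 := by
    simp [Multiset.esymm]
  rw [Pi.div_apply, hcoeff, hcoeff, hesymm0, mul_one, mul_div_cancel_left₀ _ hprod]

theorem Finset.sum_pow_eq_mul_esymm_sub_sum {R ι : Type*} [CommRing R] (s : Finset ι) (f : ι → R)
    (m : ℕ) (hm : 0 < m) :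
    ∑ i ∈ s, f i ^ m = (-1) ^ (m + 1) * m * (s.val.map f).esymm m -
      ∑ a ∈ antidiagonal m with a.1 ∈ Set.Ioo 0 m,
        (-1) ^ a.1 * (s.val.map f).esymm a.1 * ∑ i ∈ s, f i ^ a.2 := by
  have hesymm (j : ℕ) : MvPolynomial.eval (fun i : s => f i) (MvPolynomial.esymm s R j) =
      (s.val.map f).esymm j := by
    rw [← MvPolynomial.aeval_eq_eval, MvPolynomial.aeval_esymm_eq_multiset_esymm,
      univ_eq_attach, attach_val]
    exact congrArg (Multiset.esymm · j) (Multiset.attach_map_val' _ f)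
  have hpsum (j : ℕ) : MvPolynomial.eval (fun i : s => f i) (MvPolynomial.psum s R j) =
      ∑ i ∈ s, f i ^ j := by
    simp [MvPolynomial.psum, sum_attach s (fun i => f i ^ j)]
  simpa [hesymm, hpsum] using
    congrArg (MvPolynomial.eval fun i : s => f i) (MvPolynomial.psum_eq_mul_esymm_sub_sum s R m hm)

theorem exists_tendsto_sum_pow_of_tendsto_esymm {R ι : Type*} [CommRing R] [TopologicalSpace R]
    [IsTopologicalRing R] {s : ℕ → Finset ι} {f : ℕ → ι → R}
    (h : ∀ j, ∃ e, Tendsto (fun n => ((s n).val.map (f n)).esymm j) atTop (𝓝 e))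
    {m : ℕ} (hm : 0 < m) : ∃ Λ, Tendsto (fun n => ∑ i ∈ s n, f n i ^ m) atTop (𝓝 Λ) := by
  induction m using Nat.strong_induction_on with
  | _ m ih =>
  choose e he using h
  have hterm : ∀ a ∈ {a ∈ antidiagonal m | a.1 ∈ Set.Ioo 0 m}, ∃ Λ, Tendsto
      (fun n => (-1) ^ a.1 * ((s n).val.map (f n)).esymm a.1 * ∑ i ∈ s n, f n i ^ a.2) atTop
      (𝓝 Λ) := by
    intro a ha
    simp only [mem_filter, HasAntidiagonal.mem_antidiagonal, Set.mem_Ioo] at ha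
    obtain ⟨Λ, hΛ⟩ := ih a.2 (by omega) (by omega)
    exact ⟨_, ((he a.1).const_mul _).mul hΛ⟩
  choose! Λ hΛ using hterm
  simp_rw [sum_pow_eq_mul_esymm_sub_sum _ _ m hm]
  exact ⟨_, ((he m).const_mul _).sub (tendsto_finsetSum _ hΛ)⟩

theorem IsCompact.exists_tendsto_of_mapClusterPt_le {X ι : Type*} [TopologicalSpace X]
    [PartialOrder X] {s : Set X} (hs : IsCompact s) {l : Filter ι} [l.NeBot] {f : ι → X}
    (hf : ∀ i, f i ∈ s)
    (h : ∀ u ∈ s, ∀ v ∈ s, MapClusterPt u l f → MapClusterPt v l f → u ≤ v) :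
    ∃ L, Tendsto f l (𝓝 L) := by
  obtain ⟨L, hLs, hL⟩ :=
    hs.exists_mapClusterPt (f := l) (u := f) (tendsto_principal.2 (.of_forall hf))
  exact ⟨L, hs.tendsto_nhds_of_unique_mapClusterPt (.of_forall hf) fun u hus hu =>
    le_antisymm (h u hus L hLs hu hL) (h L hLs u hus hL hu)⟩

theorem le_of_forall_pow_succ_le_mul_pow {u v c : ℝ} (hv : 0 ≤ v)
    (h : ∀ m : ℕ, u ^ (m + 1) ≤ v ^ m * c) : u ≤ v := by
  by_contra! hvu
  have hu : 0 < u := hv.trans_lt hvu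
  have hlim : Tendsto (fun m : ℕ => (v / u) ^ m * c) atTop (𝓝 0) := by
    simpa using (tendsto_pow_atTop_nhds_zero_of_lt_one (div_nonneg hv hu.le)
      ((div_lt_one hu).2 hvu)).mul_const c
  refine hu.not_ge (ge_of_tendsto' hlim fun m => ?_)
  rw [div_pow, div_mul_eq_mul_div, le_div_iff₀ (pow_pos hu m), ← pow_succ']
  exact h m

section SortedSequence

variable {x : ℕ → ℝ} {N : ℕ}

theorem sum_range_pow_eq_add_sum_Ico (hzero : ∀ i, N ≤ i → x i = 0) (k : ℕ) {m : ℕ}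
    (hm : m ≠ 0) :
    ∑ i ∈ range N, x i ^ m = ∑ i ∈ range k, x i ^ m + ∑ i ∈ Ico k N, x i ^ m := by
  rcases le_total k N with hkN | hNk
  · exact (sum_range_add_sum_Ico _ hkN).symm
  · rw [Ico_eq_empty_of_le hNk, sum_empty, add_zero]
    refine sum_subset (range_subset_range.2 hNk) fun i _ hi => ?_
    rw [hzero i (by simpa using hi), zero_pow hm]

theorem pow_le_sum_Ico (hx0 : ∀ i, 0 ≤ x i) (hzero : ∀ i, N ≤ i → x i = 0) (k : ℕ) {m : ℕ}
    (hm : m ≠ 0) : x k ^ m ≤ ∑ i ∈ Ico k N, x i ^ m := by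
  rcases lt_or_ge k N with hkN | hNk
  · exact single_le_sum (fun i _ => pow_nonneg (hx0 i) m) (left_mem_Ico.2 hkN)
  · rw [hzero k hNk, zero_pow hm]
    exact sum_nonneg fun i _ => pow_nonneg (hx0 i) m

theorem sum_Ico_pow_succ_le (hx0 : ∀ i, 0 ≤ x i) (hanti : Antitone x) (k m : ℕ) :
    ∑ i ∈ Ico k N, x i ^ (m + 1) ≤ x k ^ m * ∑ i ∈ Ico k N, x i := by
  rw [mul_sum]
  refine sum_le_sum fun i hi => ?_
  rw [pow_succ]
  exact mul_le_mul_of_nonneg_right (pow_le_pow_left₀ (hx0 i) (hanti (mem_Ico.1 hi).1) m) (hx0 i)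

end SortedSequence

theorem exists_tendsto_of_tendsto_sum_pow {N : ℕ → ℕ} {x : ℕ → ℕ → ℝ} (hx0 : ∀ n k, 0 ≤ x n k)
    (hanti : ∀ n, Antitone (x n)) (hzero : ∀ n k, N n ≤ k → x n k = 0)
    (hpow : ∀ m, ∃ Λ, Tendsto (fun n => ∑ k ∈ range (N n), x n k ^ (m + 1)) atTop (𝓝 Λ))
    (k : ℕ) : ∃ L, Tendsto (fun n => x n k) atTop (𝓝 L) := by
  induction k using Nat.strong_induction_on with
  | _ k ih =>
  have htail (m : ℕ) : ∃ Λ, Tendsto (fun n => ∑ i ∈ Ico k (N n), x n i ^ (m + 1)) atTop (𝓝 Λ) := by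
    choose! L hL using ih
    obtain ⟨Λ, hΛ⟩ := hpow m
    have hhead : Tendsto (fun n => ∑ i ∈ range k, x n i ^ (m + 1)) atTop
        (𝓝 (∑ i ∈ range k, L i ^ (m + 1))) :=
      tendsto_finsetSum _ fun i hi => (hL i (mem_range.1 hi)).pow _
    refine ⟨_, (hΛ.sub hhead).congr fun n => ?_⟩
    rw [sum_range_pow_eq_add_sum_Ico (hzero n) k m.succ_ne_zero, add_sub_cancel_left]
  choose Λ hΛ using htail
  obtain ⟨B, hB⟩ := (hΛ 0).bddAbove_range
  have hsub (u : ℝ) (hu : MapClusterPt u atTop fun n => x n k) (m : ℕ) :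
      u ^ (m + 1) ≤ Λ m ∧ Λ m ≤ u ^ m * Λ 0 := by
    obtain ⟨φ, hφ, hxφ⟩ := hu.tendsto_subseq
    have hΛφ (m : ℕ) := (hΛ m).comp hφ.tendsto_atTop
    exact ⟨le_of_tendsto_of_tendsto' (hxφ.pow _) (hΛφ m) fun n =>
        pow_le_sum_Ico (hx0 _) (hzero _) k m.succ_ne_zero,
      le_of_tendsto_of_tendsto' (hΛφ m) ((hxφ.pow _).mul (hΛφ 0)) fun n => by
        simpa using sum_Ico_pow_succ_le (hx0 (φ n)) (hanti (φ n)) (N := N (φ n)) k m⟩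
  refine isCompact_Icc.exists_tendsto_of_mapClusterPt_le (s := Set.Icc 0 B)
    (fun n => ⟨hx0 n k, ?_⟩) fun u _ v hvB hu hv => ?_
  · simpa using (pow_le_sum_Ico (hx0 n) (hzero n) k one_ne_zero).trans (hB ⟨n, rfl⟩)
  · exact le_of_forall_pow_succ_le_mul_pow hvB.1 fun m =>
      (hsub u hu m).1.trans (hsub v hv m).2

theorem monotoneOn_div_two_sub : MonotoneOn (fun t : ℝ => t / (2 - t)) (Set.Iio 2) := by
  intro s hs t ht hst
  simp only [Set.mem_Iio] at hs ht
  rw [div_le_div_iff₀ (by linarith) (by linarith)]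
  linarith

theorem stmt18_general {Ω : Type*} [MeasurableSpace Ω] (μ : Measure Ω) [IsProbabilityMeasure μ]
    (K : ℕ → ℕ) (p : ℕ → ℕ → ℝ)
    (hp01 : ∀ n k, p n k ∈ Set.Icc (0 : ℝ) 1)
    (hmono : ∀ n, ∀ k k' : ℕ, k ≤ k' → p n k' ≤ p n k)
    (hzero : ∀ n k, K n ≤ k → p n k = 0)
    (X : ℕ → ℕ → Ω → ℕ) (hXmeas : ∀ n k, Measurable (X n k))
    (hX01 : ∀ n k ω, X n k ω ≤ 1)
    (hXp : ∀ n k, μ {ω | X n k ω = 1} = ENNReal.ofReal (p n k))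
    (hindep : ∀ n, iIndepFun (fun k => X n k) μ)
    (q : ℕ → ℝ) (hq : ∑' j, q j = 1)
    (hconvd : ∀ j : ℕ,
      Tendsto (fun n => (μ {ω | ∑ k ∈ Finset.range (K n), X n k ω = j}).toReal) atTop
        (nhds (q j))) :
    ∀ k : ℕ, ∃ L : ℝ, Tendsto (fun n => p n k) atTop (nhds L) := by
  have hpmf (n j : ℕ) : μ.real {ω | ∑ k ∈ range (K n), X n k ω = j} =
      (∏ k ∈ range (K n), (C (1 - p n k) + C (p n k) * Polynomial.X)).coeff j := by
    have hpk (k : ℕ) : μ.real {ω | X n k ω = 1} = p n k := by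
      rw [measureReal_def, hXp, ENNReal.toReal_ofReal (hp01 n k).1]
    simpa only [hpk] using measureReal_sum_eq_coeff_prod (hXmeas n) (hX01 n) (hindep n) (K n) j
  have hq0 : ∃ i, q i ≠ 0 := by
    by_contra! h
    simp [h] at hq
  have hesymm := exists_tendsto_esymm_of_tendsto_coeff_prod (s := fun n => range (K n)) hp01 hq0
    fun i => (hconvd i).congr fun n => hpmf n i
  have hp2 (n k : ℕ) : p n k < 2 := by linarith [(hp01 n k).2]
  have hx0 (n k : ℕ) : 0 ≤ p n k / (2 - p n k) := div_nonneg (hp01 n k).1 (by linarith [hp2 n k])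
  intro k
  obtain ⟨L, hL⟩ := exists_tendsto_of_tendsto_sum_pow (N := K) hx0
    (fun n k k' hkk' => monotoneOn_div_two_sub (hp2 n k') (hp2 n k) (hmono n k k' hkk'))
    (fun n k hk => by simp [hzero n k hk])
    (fun m => exists_tendsto_sum_pow_of_tendsto_esymm hesymm m.succ_pos) k
  have hL0 : 0 ≤ L := ge_of_tendsto' hL fun n => hx0 n k
  refine ⟨2 * L / (1 + L), ((hL.const_mul 2).div (hL.const_add 1) (by positivity)).congr
    fun n => ?_⟩
  have h2p : 2 - p n k ≠ 0 := (sub_pos.2 (hp2 n k)).ne'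
  simp only [Pi.div_apply]
  field_simp
  ring

/-- Part of direction (1) ⇒ (2) of Lemma 5.4 (seq_bin): if the Poisson-binomial sums
`#ₙ = ∑_{k<Kₙ} X n k`, with nonincreasing success probabilities `p n k`, converge in
distribution to a finite-valued random variable (i.e. the point probabilities converge
to a probability distribution `q` on `ℕ`), then for each fixed `k` the sequence
`(p n k)ₙ` converges. -/
theorem stmt18 {Ω : Type*} [MeasurableSpace Ω] (μ : Measure Ω) [IsProbabilityMeasure μ]
    (K : ℕ → ℕ) (p : ℕ → ℕ → ℝ)
    (hp01 : ∀ n k, p n k ∈ Set.Icc (0 : ℝ) 1)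
    (hpos : ∀ n k, k < K n → 0 < p n k)
    (hmono : ∀ n, ∀ k k' : ℕ, k ≤ k' → p n k' ≤ p n k)
    (hzero : ∀ n k, K n ≤ k → p n k = 0)
    (X : ℕ → ℕ → Ω → ℕ) (hXmeas : ∀ n k, Measurable (X n k))
    (hX01 : ∀ n k ω, X n k ω ≤ 1)
    (hXp : ∀ n k, μ {ω | X n k ω = 1} = ENNReal.ofReal (p n k))
    (hindep : ∀ n, iIndepFun (fun k => X n k) μ)
    (q : ℕ → ℝ) (hq : ∑' j, q j = 1)
    (hconvd : ∀ j : ℕ,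
      Tendsto (fun n => (μ {ω | ∑ k ∈ Finset.range (K n), X n k ω = j}).toReal) atTop
        (nhds (q j))) :
    ∀ k : ℕ, ∃ L : ℝ, Tendsto (fun n => p n k) atTop (nhds L) :=
  stmt18_general μ K p hp01 hmono hzero X hXmeas hX01 hXp hindep q hq hconvd
end
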